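/- arXiv:math/0106105 — 5 statements merged into one kernel-verified Lean document; each statement's English description precedes it below -/
import Mathlib

section
/- Let G be a topological group and N a closed normal subgroup. If both N (with the subspace topology) and G/N (with the quotient topology) are topologically Archimedean, then G is topologically Archimedean. -/
/-- A topological group is topologically Archimedean (TA) if it has no proper
open subgroup. -/
def IsTA (G : Type*) [Group G] [TopologicalSpace G] : Prop :=
  ∀ H : Subgroup G, IsOpen (H : Set G) → H = ⊤

/-! An open subgroup `H` of `G` meets `N` in an open subgroup of `N`, so `N ≤ H`; and its image
in `G ⧸ N` is open, hence everything. A subgroup containing `N` is the full preimage of its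
image, so `H = ⊤`. -/

theorem IsTA.le_of_isOpen {G : Type*} [Group G] [TopologicalSpace G] {N : Subgroup G}
    (hN : IsTA N) {H : Subgroup G} (hH : IsOpen (H : Set G)) : N ≤ H :=
  Subgroup.subgroupOf_eq_top.mp (hN _ (hH.preimage continuous_subtype_val))

theorem IsTA.map_eq_top_of_isOpenMap {G Q : Type*} [Group G] [TopologicalSpace G] [Group Q]
    [TopologicalSpace Q] (hQ : IsTA Q) {f : G →* Q} (hf : IsOpenMap f) {H : Subgroup G}
    (hH : IsOpen (H : Set G)) : H.map f = ⊤ :=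
  hQ _ (hf _ hH)

theorem TA_extension_general (G : Type*) [Group G] [TopologicalSpace G]
    [IsTopologicalGroup G] (N : Subgroup G) [N.Normal]
    (hN : IsTA N) (hQ : IsTA (G ⧸ N)) : IsTA G := by
  intro H hH
  have hNH : (QuotientGroup.mk' N).ker ≤ H := by
    rw [QuotientGroup.ker_mk']
    exact hN.le_of_isOpen hH
  have hmap : H.map (QuotientGroup.mk' N) = ⊤ :=
    hQ.map_eq_top_of_isOpenMap QuotientGroup.isOpenMap_coe hH
  rw [← Subgroup.comap_map_eq_self hNH, hmap, Subgroup.comap_top]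

theorem TA_extension (G : Type*) [Group G] [TopologicalSpace G]
    [IsTopologicalGroup G] (N : Subgroup G) [N.Normal] (hNc : IsClosed (N : Set G))
    (hN : IsTA N) (hQ : IsTA (G ⧸ N)) : IsTA G :=
  TA_extension_general G N hN hQ
end

section
/- Let G be a topological group and N a closed normal subgroup. If both N (with the subspace topology) and G/N (with the quotient topology) are topologically non-Archimedean, then G is topologically non-Archimedean. -/
/-- A topological group is topologically non-Archimedean (TNA) if every
neighborhood of the identity contains an open subgroup. -/
def IsTNA (G : Type*) [Group G] [TopologicalSpace G] : Prop :=
  ∀ U ∈ nhds (1 : G), ∃ H : Subgroup G, IsOpen (H : Set G) ∧ (H : Set G) ⊆ U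

/-!
Given a neighbourhood `U` of `1`, choose `U₁` with `U₁ * U₁ ⊆ U`, a subgroup `K ⊆ U₁` open in
`N`, say `N ∩ O ⊆ K`, and a symmetric neighbourhood `V ⊆ U₁` with `V * V * V ⊆ O`. An open
subgroup `B ⊆ π(V)` of `G ⧸ N` pulls back to an open subgroup `M` of `G`, and `P = V ∩ M` is
a neighbourhood of `1`. For `x, y ∈ P` some `w ∈ P` has `π w = π (x * y)`, so
`x * y / w ∈ N ∩ O ⊆ K`. Hence `K * P` is stable under right multiplication by `P`, and the
open subgroup generated by `P` lies in `K * P ⊆ U₁ * U₁ ⊆ U`.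
-/

open Set Filter Topology Pointwise

theorem Subgroup.coe_closure_subset_mul_of_forall_mul_div_mem {G : Type*} [Group G]
    (K : Subgroup G) {P : Set G} (hP₁ : (1 : G) ∈ P) (hP_inv : P⁻¹ ⊆ P)
    (hP : ∀ x ∈ P, ∀ y ∈ P, ∃ w ∈ P, x * y / w ∈ K) :
    (closure P : Set G) ⊆ (K : Set G) * P := by
  have stable : ∀ g ∈ (K : Set G) * P, ∀ y ∈ P, g * y ∈ (K : Set G) * P := by
    rintro _ ⟨k, hk, v, hv, rfl⟩ y hy
    obtain ⟨w, hw, hvyw⟩ := hP v hv y hy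
    exact ⟨k * (v * y / w), K.mul_mem hk hvyw, w, hw, by simp [mul_assoc]⟩
  intro g hg
  induction hg using closure_induction_right with
  | one => exact ⟨1, K.one_mem, 1, hP₁, one_mul 1⟩
  | mul_right x _ y hy ih => exact stable x ih y hy
  | mul_inv_cancel x _ y hy ih => exact stable x ih y⁻¹ (hP_inv (inv_mem_inv.mpr hy))

theorem IsTNA.exists_subgroup_subset_inter_subset {G : Type*} [Group G] [TopologicalSpace G]
    {N : Subgroup G} (hN : IsTNA N) {U : Set G} (hU : U ∈ 𝓝 1) :
    ∃ K : Subgroup G, (K : Set G) ⊆ U ∧ ∃ O ∈ 𝓝 (1 : G), (N : Set G) ∩ O ⊆ K := by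
  obtain ⟨H, hH_open, hHU⟩ := hN _ (continuous_subtype_val.continuousAt.preimage_mem_nhds hU)
  obtain ⟨O, hO, hOH⟩ := (mem_nhds_induced _ _ _).mp (hH_open.mem_nhds H.one_mem)
  refine ⟨H.map N.subtype, ?_, O, hO, ?_⟩
  · rintro _ ⟨h, hh, rfl⟩
    exact hHU hh
  · rintro g ⟨hgN, hgO⟩
    exact ⟨⟨g, hgN⟩, hOH hgO, rfl⟩

theorem exists_nhds_one_inv_eq_mul_mul_subset {G : Type*} [TopologicalSpace G] [Group G]
    [IsTopologicalGroup G] {O : Set G} (hO : O ∈ 𝓝 1) :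
    ∃ V ∈ 𝓝 (1 : G), V⁻¹ = V ∧ V * V * V ⊆ O := by
  obtain ⟨W, hW, hWO⟩ := exists_nhds_one_split4 hO
  refine ⟨W ∩ W⁻¹, inter_mem hW (inv_mem_nhds_one G hW), by simp [inter_comm], ?_⟩
  rintro _ ⟨_, ⟨x, hx, y, hy, rfl⟩, z, hz, rfl⟩
  simpa using hWO hx.1 hy.1 hz.1 (mem_of_mem_nhds hW)

theorem QuotientGroup.exists_mem_inter_comap_div_mem {G : Type*} [Group G] {N : Subgroup G}
    [N.Normal] {V : Set G} {B : Subgroup (G ⧸ N)} (hBV : (B : Set (G ⧸ N)) ⊆ (↑) '' V) {g : G}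
    (hg : g ∈ B.comap (mk' N)) : ∃ w ∈ V ∩ B.comap (mk' N), g / w ∈ N := by
  obtain ⟨w, hwV, hw⟩ := hBV hg
  exact ⟨w, ⟨hwV, show (w : G ⧸ N) ∈ B from hw ▸ hg⟩, eq_iff_div_mem.mp hw.symm⟩

theorem TNA_extension_general (G : Type*) [Group G] [TopologicalSpace G]
    [IsTopologicalGroup G] (N : Subgroup G) [N.Normal]
    (hN : IsTNA N) (hQ : IsTNA (G ⧸ N)) : IsTNA G := by
  intro U hU
  obtain ⟨U₁, hU₁_open, hU₁_one, hU₁U⟩ := exists_open_nhds_one_mul_subset hU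
  have hU₁ : U₁ ∈ 𝓝 1 := hU₁_open.mem_nhds hU₁_one
  obtain ⟨K, hKU₁, O, hO, hNOK⟩ := hN.exists_subgroup_subset_inter_subset hU₁
  obtain ⟨V, hV, hV_inv, hVVV⟩ := exists_nhds_one_inv_eq_mul_mul_subset (inter_mem hO hU₁)
  have hVO : V * V * V ⊆ O := hVVV.trans inter_subset_left
  have hVU₁ : V ⊆ U₁ :=
    (((subset_mul_left V (mem_of_mem_nhds hV)).trans
      (subset_mul_left _ (mem_of_mem_nhds hV))).trans hVVV).trans inter_subset_right
  obtain ⟨B, hB_open, hBV⟩ := hQ _ (QuotientGroup.isOpenMap_coe.image_mem_nhds hV)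
  set M := B.comap (QuotientGroup.mk' N)
  set P := V ∩ (M : Set G)
  have hP : P ∈ 𝓝 1 :=
    inter_mem hV ((hB_open.preimage continuous_quotient_mk').mem_nhds M.one_mem)
  have hP_inv : P⁻¹ ⊆ P := by rw [inter_inv, hV_inv, inv_coe_set]
  have hP_mul_div : ∀ x ∈ P, ∀ y ∈ P, ∃ w ∈ P, x * y / w ∈ K := by
    rintro x ⟨hxV, hxM⟩ y ⟨hyV, hyM⟩
    obtain ⟨w, hw, hxyw⟩ := QuotientGroup.exists_mem_inter_comap_div_mem hBV (M.mul_mem hxM hyM)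
    refine ⟨w, hw, hNOK ⟨hxyw, hVO ?_⟩⟩
    rw [div_eq_mul_inv]
    exact mul_mem_mul (mul_mem_mul hxV hyV) (hV_inv ▸ inv_mem_inv.mpr hw.1)
  refine ⟨Subgroup.closure P,
    Subgroup.isOpen_of_mem_nhds _ (mem_of_superset hP Subgroup.subset_closure), ?_⟩
  calc (Subgroup.closure P : Set G) ⊆ (K : Set G) * P :=
        K.coe_closure_subset_mul_of_forall_mul_div_mem (mem_of_mem_nhds hP) hP_inv hP_mul_div
    _ ⊆ U₁ * U₁ := mul_subset_mul hKU₁ (inter_subset_left.trans hVU₁)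
    _ ⊆ U := hU₁U

theorem TNA_extension (G : Type*) [Group G] [TopologicalSpace G]
    [IsTopologicalGroup G] (N : Subgroup G) [N.Normal] (hNc : IsClosed (N : Set G))
    (hN : IsTNA N) (hQ : IsTNA (G ⧸ N)) : IsTNA G :=
  TNA_extension_general G N hN hQ
end

section
/- A topological group has sufficiently many open subgroups if and only if it admits a weaker Hausdorff group topology that is topologically non-Archimedean. -/
def HasSMOG (G : Type*) [Group G] [TopologicalSpace G] : Prop :=
  sInf {H : Subgroup G | IsOpen (H : Set G)} = ⊥

section

variable {G : Type*} [Group G]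

theorem hasSMOG_antitone : Antitone (@HasSMOG G _) := fun _ _ hle h =>
  eq_bot_iff.2 <| h ▸ sInf_le_sInf fun _ hH => hle _ hH

theorem IsTNA.hasSMOG [TopologicalSpace G] [T1Space G] (h : IsTNA G) : HasSMOG G := by
  refine eq_bot_iff.2 fun x hx => by_contra fun hx1 => ?_
  obtain ⟨H, hH, hHx⟩ :=
    h _ (isOpen_compl_singleton.mem_nhds (Ne.symm (mt Subgroup.mem_bot.2 hx1)))
  exact hHx (Subgroup.mem_sInf.1 hx H hH) rfl

theorem GroupFilterBasis.isTNA_topology (B : GroupFilterBasis G)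
    (hB : ∀ U ∈ B, ∃ H : Subgroup G, (H : Set G) = U) : @IsTNA G _ B.topology := by
  let _ := B.topology
  intro U hU
  obtain ⟨_, hV, hVU⟩ := B.nhds_one_hasBasis.mem_iff.1 hU
  obtain ⟨H, rfl⟩ := hB _ hV
  exact ⟨H, H.isOpen_of_mem_nhds (B.mem_nhds_one hV), hVU⟩

variable (G) [TopologicalSpace G] [IsTopologicalGroup G]

@[reducible]
def openSubgroupsFilterBasis : GroupFilterBasis G where
  sets := (↑) '' {H : Subgroup G | IsOpen (H : Set G)}
  nonempty := ⟨_, ⊤, isOpen_univ, rfl⟩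
  inter_sets := by
    rintro _ _ ⟨H, hH, rfl⟩ ⟨K, hK, rfl⟩
    exact ⟨_, ⟨H ⊓ K, hH.inter hK, rfl⟩, subset_rfl⟩
  one' := by
    rintro _ ⟨H, -, rfl⟩
    exact H.one_mem
  mul' := by
    rintro _ ⟨H, hH, rfl⟩
    exact ⟨H, ⟨H, hH, rfl⟩, Set.mul_subset_iff.2 fun _ ha _ hb => H.mul_mem ha hb⟩
  inv' := by
    rintro _ ⟨H, hH, rfl⟩
    exact ⟨H, ⟨H, hH, rfl⟩, fun _ => H.inv_mem⟩
  conj' := by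
    rintro x _ ⟨H, hH, rfl⟩
    have hconj : Continuous (MulAut.conj x) := (continuous_const_mul x).mul continuous_const
    exact ⟨_, ⟨H.comap (MulAut.conj x).toMonoidHom, hH.preimage hconj, rfl⟩, subset_rfl⟩

theorem le_openSubgroupsFilterBasis_topology :
    ‹TopologicalSpace G› ≤ (openSubgroupsFilterBasis G).topology := by
  refine (le_iff_nhds _ _).2 fun x => ((openSubgroupsFilterBasis G).nhds_hasBasis x).ge_iff.2 ?_
  rintro _ ⟨H, hH, rfl⟩
  exact (isOpenMap_mul_left x _ hH).mem_nhds ⟨1, H.one_mem, mul_one x⟩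

theorem t2Space_openSubgroupsFilterBasis_iff :
    @T2Space G (openSubgroupsFilterBasis G).topology ↔ HasSMOG G := by
  rw [@GroupFilterBasis.t2Space_iff_sInter_subset G _ (openSubgroupsFilterBasis G).topology
    (openSubgroupsFilterBasis G) rfl]
  change ⋂₀ (((↑) : Subgroup G → Set G) '' {H | IsOpen (H : Set G)}) ⊆ {1} ↔ _
  rw [Set.sInter_image, ← Subgroup.coe_sInf, ← Subgroup.coe_bot, SetLike.coe_subset_coe,
    le_bot_iff, HasSMOG]

end

theorem SMOG_iff_weaker_TNA_topology_general (G : Type*) [Group G]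
    [τ : TopologicalSpace G] [IsTopologicalGroup G] :
    HasSMOG G ↔ ∃ τ' : TopologicalSpace G,
      (∀ U : Set G, @IsOpen G τ' U → @IsOpen G τ U) ∧
      @IsTopologicalGroup G τ' _ ∧ @T2Space G τ' ∧ @IsTNA G _ τ' := by
  constructor
  · intro h
    let B := openSubgroupsFilterBasis G
    exact ⟨B.topology, le_openSubgroupsFilterBasis_topology G, B.isTopologicalGroup,
      (t2Space_openSubgroupsFilterBasis_iff G).2 h,
      B.isTNA_topology fun _ ⟨H, _, hH⟩ => ⟨H, hH⟩⟩
  · rintro ⟨τ', hle, -, _, hTNA⟩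
    exact hasSMOG_antitone hle (@IsTNA.hasSMOG G _ τ' inferInstance hTNA)

theorem SMOG_iff_weaker_TNA_topology (G : Type*) [Group G]
    [τ : TopologicalSpace G] [IsTopologicalGroup G] [T2Space G] :
    HasSMOG G ↔ ∃ τ' : TopologicalSpace G,
      (∀ U : Set G, @IsOpen G τ' U → @IsOpen G τ U) ∧
      @IsTopologicalGroup G τ' _ ∧ @T2Space G τ' ∧ @IsTNA G _ τ' :=
  SMOG_iff_weaker_TNA_topology_general G (τ := τ)
end

section
/- A metrizable topological group G is topologically non-Archimedean if and only if it admits a compatible right-invariant non-Archimedean metric, i.e., a metric d inducing the topology with d(xg, yg) = d(x,y) for all g and satisfying d(x,y) ≤ max{d(x,z), d(z,y)}. -/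
open Filter Topology

namespace Subgroup

variable {G : Type*} [Group G] {K : ℕ → Subgroup G} {g h : G} {n : ℕ} {t : ℝ}

open Classical in
noncomputable def chainNorm (K : ℕ → Subgroup G) (g : G) : ℝ :=
  if h : ∃ n, g ∉ K n then 2⁻¹ ^ Nat.find h else 0

theorem chainNorm_nonneg : 0 ≤ chainNorm K g := by
  unfold chainNorm
  split_ifs <;> positivity

theorem chainNorm_eq_zero_iff : chainNorm K g = 0 ↔ ∀ n, g ∈ K n := by
  unfold chainNorm
  split_ifs with h <;> simpa using h

theorem chainNorm_lt_pow_iff (hK : Antitone K) : chainNorm K g < 2⁻¹ ^ n ↔ g ∈ K n := by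
  classical
  unfold chainNorm
  split_ifs with h
  · rw [pow_lt_pow_iff_right_of_lt_one₀ (by norm_num) (by norm_num), Nat.lt_find_iff]
    exact ⟨fun hn => not_not.1 (hn n le_rfl), fun hg m hm => not_not.2 (hK hm hg)⟩
  · push Not at h
    simp [h n]

theorem chainNorm_inv : chainNorm K g⁻¹ = chainNorm K g := by
  classical
  have hmem : ∀ {n}, g⁻¹ ∉ K n ↔ g ∉ K n := not_congr inv_mem_iff
  unfold chainNorm
  by_cases h : ∃ n, g ∉ K n
  · rw [dif_pos h, dif_pos (h.imp fun _ => hmem.2), Nat.find_congr' hmem]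
  · rw [dif_neg h, dif_neg fun ⟨n, hn⟩ => h ⟨n, hmem.1 hn⟩]

theorem chainNorm_one : chainNorm K 1 = 0 :=
  chainNorm_eq_zero_iff.2 fun n => (K n).one_mem

theorem chainNorm_le_of_forall (ht : 0 ≤ t) (h : ∀ n, t < 2⁻¹ ^ n → g ∈ K n) :
    chainNorm K g ≤ t := by
  classical
  unfold chainNorm
  split_ifs with hg
  · exact not_lt.1 fun hlt => Nat.find_spec hg (h _ hlt)
  · exact ht

theorem chainNorm_mul_le_max (hK : Antitone K) :
    chainNorm K (g * h) ≤ max (chainNorm K g) (chainNorm K h) :=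
  chainNorm_le_of_forall (le_max_of_le_left chainNorm_nonneg) fun _ hn =>
    mul_mem ((chainNorm_lt_pow_iff hK).1 (lt_of_le_of_lt (le_max_left _ _) hn))
      ((chainNorm_lt_pow_iff hK).1 (lt_of_le_of_lt (le_max_right _ _) hn))

theorem chainNorm_mul_inv_le_max (hK : Antitone K) (x y z : G) :
    chainNorm K (x * z⁻¹) ≤ max (chainNorm K (x * y⁻¹)) (chainNorm K (y * z⁻¹)) := by
  simpa only [mul_assoc, inv_mul_cancel_left] using
    chainNorm_mul_le_max hK (g := x * y⁻¹) (h := y * z⁻¹)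

variable (K) in
noncomputable abbrev chainMetric (hK : Antitone K) (hsep : ∀ g, (∀ n, g ∈ K n) → g = 1) :
    MetricSpace G where
  dist x y := chainNorm K (x * y⁻¹)
  dist_self x := by simp only [mul_inv_cancel, chainNorm_one]
  dist_comm x y := by rw [← chainNorm_inv, mul_inv_rev, inv_inv]
  dist_triangle x y z :=
    (chainNorm_mul_inv_le_max hK x y z).trans
      (max_le_add_of_nonneg chainNorm_nonneg chainNorm_nonneg)
  eq_of_dist_eq_zero h := mul_inv_eq_one.1 (hsep _ (chainNorm_eq_zero_iff.1 h))

variable (hK : Antitone K) (hsep : ∀ g, (∀ n, g ∈ K n) → g = 1)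

theorem chainMetric_dist_mul_right (x y g : G) :
    @dist G (chainMetric K hK hsep).toDist (x * g) (y * g) =
      @dist G (chainMetric K hK hsep).toDist x y := by
  show chainNorm K _ = chainNorm K _
  rw [mul_inv_rev, mul_assoc, mul_inv_cancel_left]

theorem chainMetric_dist_le_max (x y z : G) :
    @dist G (chainMetric K hK hsep).toDist x y ≤
      max (@dist G (chainMetric K hK hsep).toDist x z)
        (@dist G (chainMetric K hK hsep).toDist z y) :=
  chainNorm_mul_inv_le_max hK x z y

theorem chainMetric_ball (x : G) (n : ℕ) :
    @Metric.ball G (chainMetric K hK hsep).toPseudoMetricSpace x (2⁻¹ ^ n) =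
      (· * x⁻¹) ⁻¹' K n :=
  Set.ext fun _ => chainNorm_lt_pow_iff hK

theorem chainMetric_topology [t : TopologicalSpace G] [IsTopologicalGroup G]
    (hbasis : (𝓝 (1 : G)).HasBasis (fun _ => True) fun n => (K n : Set G)) :
    (chainMetric K hK hsep).toUniformSpace.toTopologicalSpace = t := by
  refine TopologicalSpace.ext_nhds fun x => ?_
  have hmetric := @Metric.nhds_basis_ball_pow G (chainMetric K hK hsep).toPseudoMetricSpace x _
    (by norm_num : (0 : ℝ) < 2⁻¹) (by norm_num)
  simp only [chainMetric_ball] at hmetric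
  rw [← nhds_translation_mul_inv x]
  exact hmetric.eq_of_same_basis (hbasis.comap _)

end Subgroup

theorem eq_one_of_forall_mem_of_hasBasis {G ι : Type*} [Group G] [TopologicalSpace G]
    [T1Space G] {p : ι → Prop} {K : ι → Subgroup G}
    (hbasis : (𝓝 (1 : G)).HasBasis p fun i => (K i : Set G))
    {g : G} (hg : ∀ i, g ∈ K i) : g = 1 := by
  by_contra hne
  obtain ⟨i, -, hi⟩ := hbasis.mem_iff.1 (compl_singleton_mem_nhds (Ne.symm hne))
  exact hi (hg i) rfl

theorem IsTNA.exists_antitone_subgroup_basis {G : Type*} [Group G] [TopologicalSpace G]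
    [FirstCountableTopology G] (h : IsTNA G) :
    ∃ K : ℕ → Subgroup G,
      Antitone K ∧ (𝓝 (1 : G)).HasBasis (fun _ => True) fun n => (K n : Set G) := by
  have hbasis : (𝓝 (1 : G)).HasBasis (fun H : Subgroup G => IsOpen (H : Set G)) (↑) :=
    ⟨fun U => ⟨fun hU => by simpa only [and_comm] using h U hU,
      fun ⟨H, hH, hHU⟩ => mem_of_superset (hH.mem_nhds H.one_mem) hHU⟩⟩
  obtain ⟨K, -, hK⟩ := hbasis.exists_antitone_subbasis
  exact ⟨K, fun _ _ hmn => SetLike.coe_subset_coe.1 (hK.antitone hmn), hK.toHasBasis⟩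

theorem dist_mul_self_eq_dist_one {G : Type*} [Group G] [Dist G]
    (hinv : ∀ x y g : G, dist (x * g) (y * g) = dist x y) (a b : G) :
    dist (a * b) b = dist a 1 := by
  rw [← hinv a 1 b, one_mul]

namespace IsUltrametricDist

variable {G : Type*} [Group G] [PseudoMetricSpace G] [IsUltrametricDist G]

def ballOneSubgroup (hinv : ∀ x y g : G, dist (x * g) (y * g) = dist x y) {ε : ℝ}
    (hε : 0 < ε) : Subgroup G where
  carrier := Metric.ball 1 ε
  one_mem' := Metric.mem_ball_self hε
  mul_mem' {a b} ha hb := calc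
    dist (a * b) 1 ≤ max (dist (a * b) b) (dist b 1) := dist_triangle_max _ _ _
    _ = max (dist a 1) (dist b 1) := by rw [dist_mul_self_eq_dist_one hinv]
    _ < ε := max_lt ha hb
  inv_mem' {a} ha := by
    rw [Metric.mem_ball, ← hinv _ _ a, inv_mul_cancel, one_mul, dist_comm]
    exact ha

theorem isTNA_of_dist_mul_right (hinv : ∀ x y g : G, dist (x * g) (y * g) = dist x y) :
    IsTNA G := fun U hU => by
  obtain ⟨ε, hε, hball⟩ := Metric.mem_nhds_iff.1 hU
  exact ⟨ballOneSubgroup hinv hε, Metric.isOpen_ball, hball⟩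

end IsUltrametricDist

theorem TNA_iff_invariant_ultrametric (G : Type*) [Group G]
    [τ : TopologicalSpace G] [IsTopologicalGroup G] [T2Space G]
    [FirstCountableTopology G] :
    IsTNA G ↔ ∃ m : MetricSpace G,
      m.toUniformSpace.toTopologicalSpace = τ ∧
      (∀ x y g : G, @dist G m.toDist (x * g) (y * g) = @dist G m.toDist x y) ∧
      (∀ x y z : G, @dist G m.toDist x y ≤
        max (@dist G m.toDist x z) (@dist G m.toDist z y)) := by
  constructor
  · intro hTNA
    obtain ⟨K, hK, hbasis⟩ := IsTNA.exists_antitone_subgroup_basis hTNA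
    have hsep : ∀ g, (∀ n, g ∈ K n) → g = 1 := fun _ =>
      eq_one_of_forall_mem_of_hasBasis hbasis
    exact ⟨Subgroup.chainMetric K hK hsep, Subgroup.chainMetric_topology hK hsep hbasis,
      Subgroup.chainMetric_dist_mul_right hK hsep, Subgroup.chainMetric_dist_le_max hK hsep⟩
  · rintro ⟨m, rfl, hinv, hultra⟩
    let _ : MetricSpace G := m
    have : IsUltrametricDist G := ⟨fun x y z => hultra x z y⟩
    exact IsUltrametricDist.isTNA_of_dist_mul_right hinv
end

section
/- The additive group ℚ of rational numbers with its usual topology is topologically Archimedean: it has no proper open subgroup. In particular, ℚ is a separable, metrizable, zero-dimensional topological group that admits no compatible invariant non-Archimedean metric. -/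
/-!
Every neighbourhood of `0` in an Archimedean ordered field contains `q / n` for `n` large, so an
open subgroup contains every `q = n • (q / n)`. An invariant ultrametric, on the other hand, makes
each ball about `0` an open subgroup, and a ball of radius `dist x 0` misses `x`. The clopen basis
of `ℚ` comes from its being a countable completely regular space.
-/

open Filter Topology

def IsTopologicallyArchimedean (G : Type*) [AddGroup G] [TopologicalSpace G] : Prop :=
  ∀ H : AddSubgroup G, IsOpen (H : Set G) → H = ⊤

theorem isTopologicallyArchimedean_of_archimedean (K : Type*) [Field K] [LinearOrder K]
    [IsStrictOrderedRing K] [Archimedean K] [TopologicalSpace K] [OrderTopology K] :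
    IsTopologicallyArchimedean K := by
  refine fun H hH => (AddSubgroup.eq_top_iff' H).2 fun q => ?_
  have hlim : Tendsto (fun n : ℕ => q / n) atTop (𝓝 0) :=
    tendsto_const_nhds.div_atTop tendsto_natCast_atTop_atTop
  obtain ⟨n, hqn, hn⟩ :=
    (hlim.eventually (hH.mem_nhds H.zero_mem) |>.and (eventually_ne_atTop 0)).exists
  have hq : q = n • (q / n) := by
    rw [nsmul_eq_mul, mul_div_cancel₀ q (Nat.cast_ne_zero.2 hn)]
  exact hq ▸ H.nsmul_mem hqn n

def IsUltrametricDist.ballOpenAddSubgroup {G : Type*} [AddGroup G] [PseudoMetricSpace G]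
    [IsUltrametricDist G] (hinv : ∀ x y g : G, dist (x + g) (y + g) = dist x y)
    {r : ℝ} (hr : 0 < r) : OpenAddSubgroup G where
  carrier := Metric.ball 0 r
  zero_mem' := Metric.mem_ball_self hr
  add_mem' {a b} ha hb := by
    have hab : dist (a + b) b = dist a 0 := by simpa using hinv a 0 b
    exact (dist_triangle_max _ b _).trans_lt (hab ▸ max_lt ha hb)
  neg_mem' {a} ha := by
    have ha' : dist (-a) 0 = dist 0 a := by simpa using (hinv (-a) 0 a).symm
    simpa [Metric.mem_ball, ha', dist_comm] using ha
  isOpen' := Metric.isOpen_ball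

theorem IsTopologicallyArchimedean.not_exists_invariant_ultrametric {G : Type*} [AddGroup G]
    [Nontrivial G] [t : TopologicalSpace G] (hG : IsTopologicallyArchimedean G) :
    ¬ ∃ m : MetricSpace G, m.toUniformSpace.toTopologicalSpace = t ∧
      (∀ x y g : G, @dist G m.toDist (x + g) (y + g) = @dist G m.toDist x y) ∧
      ∀ x y z : G, @dist G m.toDist x y ≤ max (@dist G m.toDist x z) (@dist G m.toDist z y) := by
  rintro ⟨m, rfl, hinv, hultra⟩
  have : IsUltrametricDist G := ⟨fun x y z => hultra x z y⟩
  obtain ⟨x, hx⟩ := exists_ne (0 : G)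
  let H := IsUltrametricDist.ballOpenAddSubgroup hinv (dist_pos.2 hx)
  have hxH : x ∈ (H : AddSubgroup G) := (hG H H.isOpen).symm ▸ AddSubgroup.mem_top x
  exact lt_irrefl _ (Metric.mem_ball.1 hxH)

theorem rat_TA_no_ultrametric :
    (∀ H : AddSubgroup ℚ, IsOpen (H : Set ℚ) → H = ⊤) ∧
    TopologicalSpace.SeparableSpace ℚ ∧
    TopologicalSpace.MetrizableSpace ℚ ∧
    (∃ B : Set (Set ℚ), TopologicalSpace.IsTopologicalBasis B ∧
      ∀ s ∈ B, IsClopen s) ∧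
    ¬ ∃ m : MetricSpace ℚ,
        m.toUniformSpace.toTopologicalSpace = (inferInstance : TopologicalSpace ℚ) ∧
        (∀ x y g : ℚ, @dist ℚ m.toDist (x + g) (y + g) = @dist ℚ m.toDist x y) ∧
        (∀ x y z : ℚ, @dist ℚ m.toDist x y ≤
          max (@dist ℚ m.toDist x z) (@dist ℚ m.toDist z y)) := by
  have hTA := isTopologicallyArchimedean_of_archimedean ℚ
  have hclopen : TopologicalSpace.IsTopologicalBasis {s : Set ℚ | IsClopen s} :=
    CompletelyRegularSpace.isTopologicalBasis_clopens_of_cardinalMk_lt_continuum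
      (Cardinal.mk_le_aleph0.trans_lt Cardinal.aleph0_lt_continuum)
  exact ⟨hTA, inferInstance, inferInstance, ⟨_, hclopen, fun _ => id⟩,
    hTA.not_exists_invariant_ultrametric⟩
end
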